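/- arXiv:2001.08375 — 3 statements merged into one kernel-verified Lean document; each statement's English description precedes it below -/
import Mathlib

section
/- Universal no-broadcasting for matrix algebras: let n ≥ 2. There is no linear map μ : Matrix (Fin n × Fin n) (Fin n × Fin n) ℂ → Matrix (Fin n) (Fin n) ℂ satisfying all of the following: (i) the Kadison–Schwarz inequality, i.e. the matrix μ (xᴴ * x) − (μ x)ᴴ * (μ x) is positive semidefinite for every x; (ii) μ (a ⊗ₖ 1) = a for every a ∈ Matrix (Fin n) (Fin n) ℂ; (iii) μ (1 ⊗ₖ a) = a for every a ∈ Matrix (Fin n) (Fin n) ℂ. -/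
/-!
A Kadison–Schwarz map `μ` is multiplicative on its multiplicative domain: if
`μ (aᴴ a) = (μ a)ᴴ μ a`, then `μ (aᴴ y) = (μ a)ᴴ μ y` for every `y`, because the positive
semidefinite defect of `a + c • y` is a quadratic in `c : ℂ` with vanishing constant term, which
forces its linear coefficient to vanish. A broadcasting map has both `p ⊗ₖ 1` and `1 ⊗ₖ q` in its
multiplicative domain, so `μ (p ⊗ₖ q)` equals both `p * q` and `q * p`, which is absurd for
non-commuting matrix units.
-/

open Matrix Kronecker
open scoped ComplexOrder

namespace Complex

theorem eq_zero_of_forall_nonneg_ofReal_mul_add_sq_mul {z w : ℂ}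
    (h : ∀ t : ℝ, 0 ≤ (t : ℂ) * z + (t : ℂ) ^ 2 * w) : z = 0 := by
  have him : z.im = 0 := by
    have h₁ := (le_def.mp (h 1)).2
    have h₂ := (le_def.mp (h (-1))).2
    simp only [zero_im, add_im, neg_im, ofReal_one, ofReal_neg, one_mul, neg_mul, one_pow,
      even_two, Even.neg_pow] at h₁ h₂
    linarith
  have hre : z.re = 0 := by
    have hdisc : discrim w.re z.re 0 ≤ 0 := discrim_le_zero fun t => by
      simpa [sq, mul_comm, add_comm] using (le_def.mp (h t)).1
    rw [discrim] at hdisc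
    nlinarith [sq_nonneg z.re]
  exact ext hre him

theorem eq_zero_of_forall_nonneg_mul_add_star_mul_add_mul_star_mul {A B C : ℂ}
    (h : ∀ c : ℂ, 0 ≤ c * A + star c * B + c * star c * C) : A = 0 := by
  have hsum : A + B = 0 := eq_zero_of_forall_nonneg_ofReal_mul_add_sq_mul (w := C) fun t => by
    convert h t using 1
    simp only [RCLike.star_def, conj_ofReal]
    ring
  have hdiff : I * (A - B) = 0 :=
    eq_zero_of_forall_nonneg_ofReal_mul_add_sq_mul (w := C) fun t => by
      convert h (t * I) using 1
      simp only [star_mul', RCLike.star_def, conj_ofReal, conj_I]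
      linear_combination (t : ℂ) ^ 2 * C * I_sq
  have hdiff' : A - B = 0 := (mul_eq_zero.mp hdiff).resolve_left I_ne_zero
  linear_combination (hsum + hdiff') / 2

end Complex

theorem Matrix.eq_zero_of_forall_star_dotProduct_mulVec_self {k : Type*} [Fintype k]
    [DecidableEq k] {M : Matrix k k ℂ} (h : ∀ v, star v ⬝ᵥ M *ᵥ v = 0) : M = 0 := by
  have hlin : M.toEuclideanLin = 0 := (inner_map_self_eq_zero _).mp fun x => by
    rw [← inner_conj_symm, EuclideanSpace.inner_eq_star_dotProduct, dotProduct_comm]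
    simp [h]
  simpa using hlin

section KadisonSchwarz

variable {m k : Type*} [Fintype m] [Fintype k] (μ : Matrix m m ℂ →ₗ[ℂ] Matrix k k ℂ)

def schwarzDefect (x y : Matrix m m ℂ) : Matrix k k ℂ :=
  μ (xᴴ * y) - (μ x)ᴴ * μ y

theorem schwarzDefect_add_smul (a y : Matrix m m ℂ) (c : ℂ) :
    schwarzDefect μ (a + c • y) (a + c • y) =
      schwarzDefect μ a a + c • schwarzDefect μ a y + star c • schwarzDefect μ y a +
        (c * star c) • schwarzDefect μ y y := by
  simp only [schwarzDefect, conjTranspose_add, conjTranspose_smul, add_mul, mul_add, map_add,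
    map_smul, smul_mul_assoc, mul_smul_comm]
  module

variable [DecidableEq k] {μ}

theorem map_conjTranspose_mul_of_map_conjTranspose_mul_self
    (hμ : ∀ x, (schwarzDefect μ x x).PosSemidef) {a : Matrix m m ℂ}
    (ha : μ (aᴴ * a) = (μ a)ᴴ * μ a) (y : Matrix m m ℂ) :
    μ (aᴴ * y) = (μ a)ᴴ * μ y := by
  suffices schwarzDefect μ a y = 0 from sub_eq_zero.mp this
  refine eq_zero_of_forall_star_dotProduct_mulVec_self fun v => ?_
  refine Complex.eq_zero_of_forall_nonneg_mul_add_star_mul_add_mul_star_mul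
    (B := star v ⬝ᵥ schwarzDefect μ y a *ᵥ v) (C := star v ⬝ᵥ schwarzDefect μ y y *ᵥ v) fun c => ?_
  have haa : schwarzDefect μ a a = 0 := sub_eq_zero.mpr ha
  simpa only [schwarzDefect_add_smul, haa, zero_add, add_mulVec, smul_mulVec, dotProduct_add,
    dotProduct_smul, smul_eq_mul] using (hμ (a + c • y)).dotProduct_mulVec_nonneg v

variable {n : Type*} [Fintype n] [DecidableEq m] [DecidableEq n]

theorem map_kronecker_eq_mul_map_one_kronecker {μ : Matrix (m × n) (m × n) ℂ →ₗ[ℂ] Matrix m m ℂ}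
    (hμ : ∀ x, (schwarzDefect μ x x).PosSemidef) (hL : ∀ p, μ (p ⊗ₖ 1) = p)
    (p : Matrix m m ℂ) (q : Matrix n n ℂ) : μ (p ⊗ₖ q) = p * μ (1 ⊗ₖ q) := by
  have hmul : μ ((pᴴ ⊗ₖ 1)ᴴ * (pᴴ ⊗ₖ 1)) = (μ (pᴴ ⊗ₖ 1))ᴴ * μ (pᴴ ⊗ₖ 1) := by
    simp only [conjTranspose_kronecker, conjTranspose_conjTranspose, conjTranspose_one,
      ← mul_kronecker_mul, mul_one, hL]
  have hdom := map_conjTranspose_mul_of_map_conjTranspose_mul_self hμ hmul (1 ⊗ₖ q)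
  simp only [conjTranspose_kronecker, conjTranspose_conjTranspose, conjTranspose_one, hL] at hdom
  rwa [← mul_kronecker_mul, mul_one, one_mul] at hdom

theorem map_kronecker_eq_mul_map_kronecker_one {μ : Matrix (m × n) (m × n) ℂ →ₗ[ℂ] Matrix n n ℂ}
    (hμ : ∀ x, (schwarzDefect μ x x).PosSemidef) (hR : ∀ q, μ (1 ⊗ₖ q) = q)
    (p : Matrix m m ℂ) (q : Matrix n n ℂ) : μ (p ⊗ₖ q) = q * μ (p ⊗ₖ 1) := by
  have hmul : μ ((1 ⊗ₖ qᴴ)ᴴ * (1 ⊗ₖ qᴴ)) = (μ (1 ⊗ₖ qᴴ))ᴴ * μ (1 ⊗ₖ qᴴ) := by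
    simp only [conjTranspose_kronecker, conjTranspose_conjTranspose, conjTranspose_one,
      ← mul_kronecker_mul, mul_one, hR]
  have hdom := map_conjTranspose_mul_of_map_conjTranspose_mul_self hμ hmul (p ⊗ₖ 1)
  simp only [conjTranspose_kronecker, conjTranspose_conjTranspose, conjTranspose_one, hR] at hdom
  rwa [← mul_kronecker_mul, mul_one, one_mul] at hdom

end KadisonSchwarz

/-- **Universal no-broadcasting theorem for matrix algebras.** For `n ≥ 2` there is no linear
map `μ : Mₙ(ℂ) ⊗ Mₙ(ℂ) → Mₙ(ℂ)` (with the tensor product realized via the Kronecker product)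
that satisfies the Kadison–Schwarz inequality and restricts to the identity on both tensor
factors, i.e. `μ (a ⊗ₖ 1) = a = μ (1 ⊗ₖ a)` for all `a`. -/
theorem no_broadcasting_matrix (n : ℕ) (hn : 2 ≤ n) :
    ¬ ∃ μ : Matrix (Fin n × Fin n) (Fin n × Fin n) ℂ →ₗ[ℂ] Matrix (Fin n) (Fin n) ℂ,
        (∀ x : Matrix (Fin n × Fin n) (Fin n × Fin n) ℂ,
          (μ (xᴴ * x) - (μ x)ᴴ * (μ x)).PosSemidef) ∧
        (∀ a : Matrix (Fin n) (Fin n) ℂ, μ (a ⊗ₖ (1 : Matrix (Fin n) (Fin n) ℂ)) = a) ∧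
        (∀ a : Matrix (Fin n) (Fin n) ℂ, μ ((1 : Matrix (Fin n) (Fin n) ℂ) ⊗ₖ a) = a) := by
  rintro ⟨μ, hμ, hL, hR⟩
  have hcomm (p q : Matrix (Fin n) (Fin n) ℂ) : p * q = q * p := by
    rw [← hR q, ← map_kronecker_eq_mul_map_one_kronecker hμ hL, hR q,
      map_kronecker_eq_mul_map_kronecker_one hμ hR, hL]
  let i : Fin n := ⟨0, by omega⟩
  let j : Fin n := ⟨1, by omega⟩
  have hij : i ≠ j := by simp [i, j, Fin.ext_iff]
  simpa [hij] using congrFun₂ (hcomm (single i j 1) (single j i 1)) i i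
end

section
/- SPU maps are a.e. modular: let A, B, C be unital C*-algebras over ℂ and let F : B → A, G : A → B, and ξ : B → C be SPU maps such that G (F b) − b ∈ N_ξ for every b ∈ B (G is a disintegration relative to ξ). Then: (i) ξ (G (a * F b)) = ξ (G a * b) for all a ∈ A and b ∈ B (G satisfies the Bayes condition with respect to ω := ξ ∘ G and ξ); (ii) F (star b * c) − star (F b) * F c ∈ N_{ξ ∘ G} for all b, c ∈ B (F is (ξ ∘ G)-a.e. deterministic); (iii) ξ (G (a * F b) * x) = ξ (G a * b * x) for all a ∈ A and b, x ∈ B (G is ξ-a.e. modular with respect to F). -/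
/-!
A Schwarz map is positive, and for a sesquilinear map `S` with `0 ≤ S x x` the Cauchy–Schwarz
argument shows that `S d d = 0` forces `S c d = S d c = 0`; so the null space of `S` is a
submodule, and for `S x y = φ (x⋆ y)` a left ideal.

The disintegration hypothesis gives `ξ (y * G (F x)) = ξ (y * x)`. Sandwiching
`ξ (G (F b⋆ F b))` between `ξ (G (F b)⋆ G (F b)) = ξ (b⋆ b)` and `ξ (G (F (b⋆ b))) = ξ (b⋆ b)`
shows that `F b` is null for the Schwarz defect of `G` seen through `ξ`, which is the Bayes
condition (i). The Schwarz defect `F (b⋆ b) - F b⋆ F b` is positive and annihilated by `ξ ∘ G`,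
hence lies in `N_{ξ ∘ G}`; polarization extends this to `F (b⋆ c) - F b⋆ F c`, which is (ii).
Modularity (iii) is (i) applied twice, with (ii) replacing `F b * F x` by `F (b * x)`.
-/

open Filter Topology

section ClosedCone

variable {Z : Type*} [AddCommGroup Z] [PartialOrder Z] [Module ℝ Z] [PosSMulMono ℝ Z]
  [TopologicalSpace Z] [IsTopologicalAddGroup Z] [ContinuousSMul ℝ Z] [OrderClosedTopology Z]

theorem nonneg_of_forall_nonneg_add_smul {e h : Z} (H : ∀ t : ℝ, 0 < t → 0 ≤ e + t • h) :
    0 ≤ h := by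
  have hlim : Tendsto (fun t : ℝ => t⁻¹ • e + h) atTop (𝓝 h) := by
    simpa using ((tendsto_inv_atTop_zero (𝕜 := ℝ)).smul_const e).add_const h
  refine ge_of_tendsto hlim ((eventually_gt_atTop 0).mono fun t ht => ?_)
  simpa [smul_add, smul_smul, inv_mul_cancel₀ ht.ne'] using
    smul_nonneg (inv_nonneg.2 ht.le) (H t ht)

theorem eq_zero_of_forall_nonneg_add_smul [IsOrderedAddMonoid Z] {e h : Z}
    (H : ∀ t : ℝ, 0 ≤ e + t • h) : h = 0 := by
  refine le_antisymm ?_ (nonneg_of_forall_nonneg_add_smul fun t _ => H t)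
  refine neg_nonneg.1 (nonneg_of_forall_nonneg_add_smul (e := e) fun t _ => ?_)
  simpa using H (-t)

end ClosedCone

namespace LinearMap

section Sesquilinear

variable {M N Z : Type*} [AddCommGroup M] [Module ℂ M] [AddCommGroup N] [Module ℂ N]
  [CStarAlgebra Z] [PartialOrder Z] [StarOrderedRing Z]

theorem apply_eq_zero_of_apply_self_eq_zero {S : M →ₗ⋆[ℂ] M →ₗ[ℂ] Z} (hS : ∀ x, 0 ≤ S x x)
    {d : M} (hd : S d d = 0) (c : M) : S c d = 0 ∧ S d c = 0 := by
  have key (z : ℂ) : 0 ≤ S c c + (z • S c d + star z • S d c) := by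
    simpa [hd, add_assoc] using hS (c + z • d)
  have hsum : S c d + S d c = 0 :=
    eq_zero_of_forall_nonneg_add_smul fun t => by simpa [← Complex.coe_smul] using key t
  have hdiff : Complex.I • (S c d - S d c) = 0 :=
    eq_zero_of_forall_nonneg_add_smul fun t => by
      simpa [← Complex.coe_smul, smul_sub, smul_smul, sub_eq_add_neg, mul_comm] using
        key (t * Complex.I)
  have heq : S c d = S d c :=
    sub_eq_zero.1 ((smul_eq_zero.1 hdiff).resolve_left Complex.I_ne_zero)
  have h2 : (2 : ℂ) • S c d = 0 := by rw [two_smul]; nth_rw 2 [heq]; exact hsum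
  have hcd := (smul_eq_zero.1 h2).resolve_left two_ne_zero
  exact ⟨hcd, heq ▸ hcd⟩

theorem mem_ker_iff_apply_self_eq_zero {S : M →ₗ⋆[ℂ] M →ₗ[ℂ] Z} (hS : ∀ x, 0 ≤ S x x) {d : M} :
    d ∈ ker S ↔ S d d = 0 :=
  ⟨fun h => by rw [mem_ker.1 h, zero_apply],
    fun h => mem_ker.2 (ext fun c => (apply_eq_zero_of_apply_self_eq_zero hS h c).2)⟩

theorem apply_mem_of_forall_apply_self_mem (S : M →ₗ⋆[ℂ] M →ₗ[ℂ] N) {P : Submodule ℂ N}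
    (hP : ∀ x, S x x ∈ P) (x y : M) : S x y ∈ P := by
  have polarization : (4 : ℂ) • S x y = S (x + y) (x + y) - S (x - y) (x - y)
      - Complex.I • S (x + Complex.I • y) (x + Complex.I • y)
      + Complex.I • S (x - Complex.I • y) (x - Complex.I • y) := by
    simp only [map_add, map_sub, map_smulₛₗ, add_apply, sub_apply, smul_apply, smul_add,
      smul_sub, smul_smul, Complex.conj_I, RingHom.id_apply]
    match_scalars <;> ring_nf <;> norm_num [Complex.I_sq]
  have h4 : (4 : ℂ) • S x y ∈ P := by
    rw [polarization]
    exact P.add_mem (P.sub_mem (P.sub_mem (hP _) (hP _)) (P.smul_mem _ (hP _)))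
      (P.smul_mem _ (hP _))
  simpa [smul_smul] using P.smul_mem (4 : ℂ)⁻¹ h4

end Sesquilinear

section CStarAlgebra

variable {X Y : Type*} [CStarAlgebra X] [CStarAlgebra Y]

noncomputable def starMulForm (φ : X →ₗ[ℂ] Y) : X →ₗ⋆[ℂ] X →ₗ[ℂ] Y :=
  mk₂'ₛₗ (starRingEnd ℂ) (RingHom.id ℂ) (fun x y => φ (star x * y))
    (by simp [add_mul]) (by simp) (by simp [mul_add]) (by simp)

@[simp]
theorem starMulForm_apply (φ : X →ₗ[ℂ] Y) (x y : X) : starMulForm φ x y = φ (star x * y) := rfl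

theorem starMulForm_apply_self_nonneg [PartialOrder X] [StarOrderedRing X] [PartialOrder Y]
    {φ : X →ₗ[ℂ] Y} (hφ : ∀ x, 0 ≤ x → 0 ≤ φ x) (x : X) : 0 ≤ starMulForm φ x x :=
  hφ _ (star_mul_self_nonneg x)

theorem mul_mem_ker_starMulForm {φ : X →ₗ[ℂ] Y} {x : X} (hx : x ∈ ker (starMulForm φ)) (a : X) :
    a * x ∈ ker (starMulForm φ) :=
  mem_ker.2 <| ext fun c => by
    simpa [mul_assoc] using congr($(mem_ker.1 hx) (star a * c))

noncomputable def schwarzDefect (Φ : X →ₗ[ℂ] Y) : X →ₗ⋆[ℂ] X →ₗ[ℂ] Y :=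
  mk₂'ₛₗ (starRingEnd ℂ) (RingHom.id ℂ) (fun x y => Φ (star x * y) - star (Φ x) * Φ y)
    (by intros; simp only [star_add, add_mul, map_add]; abel)
    (by intros; simp [smul_sub])
    (by intros; simp only [mul_add, map_add]; abel)
    (by intros; simp [smul_sub])

@[simp]
theorem schwarzDefect_apply (Φ : X →ₗ[ℂ] Y) (x y : X) :
    schwarzDefect Φ x y = Φ (star x * y) - star (Φ x) * Φ y := rfl

def IsSchwarz [PartialOrder Y] (Φ : X →ₗ[ℂ] Y) : Prop :=
  ∀ x, star (Φ x) * Φ x ≤ Φ (star x * x)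

theorem IsSchwarz.schwarzDefect_apply_self_nonneg [PartialOrder Y] [StarOrderedRing Y]
    {Φ : X →ₗ[ℂ] Y} (hΦ : Φ.IsSchwarz) (x : X) : 0 ≤ schwarzDefect Φ x x :=
  sub_nonneg.2 (hΦ x)

variable [PartialOrder X] [StarOrderedRing X] [PartialOrder Y] [StarOrderedRing Y]

theorem monotone_of_map_nonneg {φ : X →ₗ[ℂ] Y} (hφ : ∀ x, 0 ≤ x → 0 ≤ φ x) : Monotone φ :=
  (PositiveLinearMap.mk₀ φ hφ).monotone'

theorem map_star_of_map_nonneg {φ : X →ₗ[ℂ] Y} (hφ : ∀ x, 0 ≤ x → 0 ≤ φ x) (x : X) :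
    φ (star x) = star (φ x) :=
  map_star (PositiveLinearMap.mk₀ φ hφ) x

theorem IsSchwarz.map_nonneg {Φ : X →ₗ[ℂ] Y} (hΦ : Φ.IsSchwarz) {x : X} (hx : 0 ≤ x) :
    0 ≤ Φ x := by
  obtain ⟨s, rfl⟩ := CStarAlgebra.nonneg_iff_eq_star_mul_self.1 hx
  exact (star_mul_self_nonneg _).trans (hΦ s)

theorem mem_ker_starMulForm_of_nonneg {φ : X →ₗ[ℂ] Y} (hφ : ∀ x, 0 ≤ x → 0 ≤ φ x) {p : X}
    (hp : 0 ≤ p) (h : φ p = 0) : p ∈ ker (starMulForm φ) := by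
  obtain ⟨s, hs, rfl⟩ := CStarAlgebra.nonneg_iff_exists_isSelfAdjoint_and_eq_mul_self.1 hp
  have hs_mem : s ∈ ker (starMulForm φ) :=
    (mem_ker_iff_apply_self_eq_zero (starMulForm_apply_self_nonneg hφ)).2 (by simpa [hs.star_eq])
  exact mul_mem_ker_starMulForm hs_mem s

end CStarAlgebra

end LinearMap

open LinearMap

section Disintegration

variable {A B C : Type*} [CStarAlgebra A] [CStarAlgebra B] [PartialOrder B] [StarOrderedRing B]
  [CStarAlgebra C] [PartialOrder C] [StarOrderedRing C]

def IsDisintegration (F : B →ₗ[ℂ] A) (G : A →ₗ[ℂ] B) (ξ : B →ₗ[ℂ] C) : Prop :=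
  ∀ b, ξ (star (G (F b) - b) * (G (F b) - b)) = 0

namespace IsDisintegration

variable {F : B →ₗ[ℂ] A} {G : A →ₗ[ℂ] B} {ξ : B →ₗ[ℂ] C}

theorem map_mul_map_map (hD : IsDisintegration F G ξ) (hξ : ∀ x, 0 ≤ x → 0 ≤ ξ x) (y x : B) :
    ξ (y * G (F x)) = ξ (y * x) := by
  have h := (apply_eq_zero_of_apply_self_eq_zero (starMulForm_apply_self_nonneg hξ) (hD x)
    (star y)).1
  simpa [mul_sub, sub_eq_zero] using h

theorem map_map_map (hD : IsDisintegration F G ξ) (hξ : ∀ x, 0 ≤ x → 0 ≤ ξ x) (x : B) :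
    ξ (G (F x)) = ξ x := by
  simpa using hD.map_mul_map_map hξ 1 x

theorem map_star_map_map_mul_self (hD : IsDisintegration F G ξ) (hξ : ∀ x, 0 ≤ x → 0 ≤ ξ x)
    (b : B) : ξ (star (G (F b)) * G (F b)) = ξ (star b * b) :=
  calc ξ (star (G (F b)) * G (F b)) = ξ (star (G (F b)) * b) := hD.map_mul_map_map hξ _ _
    _ = star (ξ (star b * G (F b))) := by rw [← map_star_of_map_nonneg hξ, star_mul, star_star]
    _ = star (ξ (star b * b)) := by rw [hD.map_mul_map_map hξ]
    _ = ξ (star b * b) := by rw [← map_star_of_map_nonneg hξ, star_mul, star_star]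

variable [PartialOrder A] [StarOrderedRing A]

theorem map_map_star_map_mul_self (hD : IsDisintegration F G ξ) (hF : F.IsSchwarz)
    (hG : G.IsSchwarz) (hξ : ∀ x, 0 ≤ x → 0 ≤ ξ x) (b : B) :
    ξ (G (star (F b) * F b)) = ξ (star b * b) := by
  refine le_antisymm ?_ ?_
  · calc ξ (G (star (F b) * F b)) ≤ ξ (G (F (star b * b))) :=
          monotone_of_map_nonneg hξ (monotone_of_map_nonneg (fun _ => hG.map_nonneg) (hF b))
      _ = ξ (star b * b) := hD.map_map_map hξ _
  · calc ξ (star b * b) = ξ (star (G (F b)) * G (F b)) :=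
          (hD.map_star_map_map_mul_self hξ b).symm
      _ ≤ ξ (G (star (F b) * F b)) := monotone_of_map_nonneg hξ (hG (F b))

theorem map_map_mul_map (hD : IsDisintegration F G ξ) (hF : F.IsSchwarz) (hG : G.IsSchwarz)
    (hξ : ∀ x, 0 ≤ x → 0 ≤ ξ x) (a : A) (b : B) : ξ (G (a * F b)) = ξ (G a * G (F b)) := by
  set T := (schwarzDefect G).compr₂ₛₗ ξ
  have hT (x : A) : 0 ≤ T x x := hξ _ (hG.schwarzDefect_apply_self_nonneg x)
  have hTF : T (F b) (F b) = 0 := by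
    simp [T, hD.map_map_star_map_mul_self hF hG hξ, hD.map_star_map_map_mul_self hξ]
  have h := (apply_eq_zero_of_apply_self_eq_zero hT hTF (star a)).1
  simpa [T, map_star_of_map_nonneg fun _ => hG.map_nonneg, sub_eq_zero] using h

theorem bayes (hD : IsDisintegration F G ξ) (hF : F.IsSchwarz) (hG : G.IsSchwarz)
    (hξ : ∀ x, 0 ≤ x → 0 ≤ ξ x) (a : A) (b : B) : ξ (G (a * F b)) = ξ (G a * b) := by
  rw [hD.map_map_mul_map hF hG hξ, hD.map_mul_map_map hξ]

theorem schwarzDefect_mem_ker (hD : IsDisintegration F G ξ) (hF : F.IsSchwarz) (hG : G.IsSchwarz)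
    (hξ : ∀ x, 0 ≤ x → 0 ≤ ξ x) (b c : B) : schwarzDefect F b c ∈ ker (starMulForm (ξ ∘ₗ G)) :=
  apply_mem_of_forall_apply_self_mem _ (fun d => mem_ker_starMulForm_of_nonneg
    (fun x hx => hξ (G x) (hG.map_nonneg hx)) (hF.schwarzDefect_apply_self_nonneg d)
    (by simp [hD.map_map_map hξ, hD.map_map_star_map_mul_self hF hG hξ])) b c

theorem map_map_mul_schwarzDefect (hD : IsDisintegration F G ξ) (hF : F.IsSchwarz)
    (hG : G.IsSchwarz) (hξ : ∀ x, 0 ≤ x → 0 ≤ ξ x) (a : A) (b c : B) :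
    ξ (G (a * schwarzDefect F b c)) = 0 := by
  have hω := starMulForm_apply_self_nonneg (φ := ξ ∘ₗ G) fun x hx => hξ (G x) (hG.map_nonneg hx)
  have hQ := (mem_ker_iff_apply_self_eq_zero hω).1 (hD.schwarzDefect_mem_ker hF hG hξ b c)
  simpa using (apply_eq_zero_of_apply_self_eq_zero hω hQ (star a)).1

theorem modular (hD : IsDisintegration F G ξ) (hF : F.IsSchwarz) (hG : G.IsSchwarz)
    (hξ : ∀ x, 0 ≤ x → 0 ≤ ξ x) (a : A) (b x : B) : ξ (G (a * F b) * x) = ξ (G a * b * x) := by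
  have hmult : ξ (G (a * (F b * F x))) = ξ (G (a * F (b * x))) := by
    have h := hD.map_map_mul_schwarzDefect hF hG hξ a (star b) x
    rw [schwarzDefect_apply, star_star, map_star_of_map_nonneg (fun _ => hF.map_nonneg), star_star,
      mul_sub, map_sub, map_sub, sub_eq_zero] at h
    exact h.symm
  calc ξ (G (a * F b) * x) = ξ (G (a * F b * F x)) := (hD.bayes hF hG hξ _ _).symm
    _ = ξ (G (a * F (b * x))) := by rw [mul_assoc, hmult]
    _ = ξ (G a * b * x) := by rw [hD.bayes hF hG hξ, mul_assoc]

end IsDisintegration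

end Disintegration

theorem spu_ae_modular_general
    {A B C : Type*}
    [CStarAlgebra A] [PartialOrder A] [StarOrderedRing A]
    [CStarAlgebra B] [PartialOrder B] [StarOrderedRing B]
    [CStarAlgebra C] [PartialOrder C] [StarOrderedRing C]
    (F : B →ₗ[ℂ] A)
    (hFKS : ∀ b : B, star (F b) * F b ≤ F (star b * b))
    (G : A →ₗ[ℂ] B)
    (hGKS : ∀ a : A, star (G a) * G a ≤ G (star a * a))
    (ξ : B →ₗ[ℂ] C)
    (hξKS : ∀ b : B, star (ξ b) * ξ b ≤ ξ (star b * b))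
    (hdisint : ∀ b : B, ξ (star (G (F b) - b) * (G (F b) - b)) = 0) :
    (∀ (a : A) (b : B), ξ (G (a * F b)) = ξ (G a * b)) ∧
    (∀ b c : B,
      ξ (G (star (F (star b * c) - star (F b) * F c) * (F (star b * c) - star (F b) * F c)))
        = 0) ∧
    (∀ (a : A) (b x : B), ξ (G (a * F b) * x) = ξ (G a * b * x)) := by
  have hD : IsDisintegration F G ξ := hdisint
  have hξ : ∀ b, 0 ≤ b → 0 ≤ ξ b := fun _ => IsSchwarz.map_nonneg hξKS
  refine ⟨hD.bayes hFKS hGKS hξ, fun b c => ?_, hD.modular hFKS hGKS hξ⟩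
  simpa using hD.map_map_mul_schwarzDefect hFKS hGKS hξ (star (schwarzDefect F b c)) b c

/-- **SPU maps are a.e. modular.** Let `F : B → A`, `G : A → B`, and `ξ : B → C` be SPU maps
between unital C*-algebras over `ℂ` such that `G (F b) - b` lies in the right nullspace `N_ξ`
for every `b` (so `G` is a disintegration relative to `ξ`). Then, with `ω := ξ ∘ G`:
(i) `ξ (G (a * F b)) = ξ (G a * b)` (the Bayes condition);
(ii) `F (star b * c) - star (F b) * F c ∈ N_{ξ ∘ G}` (`F` is `(ξ ∘ G)`-a.e. deterministic);
(iii) `ξ (G (a * F b) * x) = ξ (G a * b * x)` (`G` is `ξ`-a.e. modular with respect to `F`). -/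
theorem spu_ae_modular
    {A B C : Type*}
    [CStarAlgebra A] [PartialOrder A] [StarOrderedRing A]
    [CStarAlgebra B] [PartialOrder B] [StarOrderedRing B]
    [CStarAlgebra C] [PartialOrder C] [StarOrderedRing C]
    (F : B →ₗ[ℂ] A) (hF1 : F 1 = 1)
    (hFKS : ∀ b : B, star (F b) * F b ≤ F (star b * b))
    (G : A →ₗ[ℂ] B) (hG1 : G 1 = 1)
    (hGKS : ∀ a : A, star (G a) * G a ≤ G (star a * a))
    (ξ : B →ₗ[ℂ] C) (hξ1 : ξ 1 = 1)
    (hξKS : ∀ b : B, star (ξ b) * ξ b ≤ ξ (star b * b))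
    (hdisint : ∀ b : B, ξ (star (G (F b) - b) * (G (F b) - b)) = 0) :
    (∀ (a : A) (b : B), ξ (G (a * F b)) = ξ (G a * b)) ∧
    (∀ b c : B,
      ξ (G (star (F (star b * c) - star (F b) * F c) * (F (star b * c) - star (F b) * F c)))
        = 0) ∧
    (∀ (a : A) (b x : B), ξ (G (a * F b) * x) = ξ (G a * b * x)) :=
  spu_ae_modular_general F hFKS G hGKS ξ hξKS hdisint
end

section
/- Composition of almost-everywhere equivalence classes of SPU maps: let A, B, D, E be unital C*-algebras over ℂ, let ω : A → E be an SPU map, let F, F' : B → A be SPU maps with F b − F' b ∈ N_ω for every b ∈ B, set ξ := ω ∘ F, and let G, G' : D → B be SPU maps with G d − G' d ∈ N_ξ for every d ∈ D. Then F (G d) − F' (G' d) ∈ N_ω for every d ∈ D. -/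
/-!
A Schwarz map `ω` is positive, hence monotone, and `ω n = 0` whenever `ω (n⋆n) = 0`, because
`(ω n)⋆(ω n) ≤ ω (n⋆n)`. Its null space `N_ω` is closed under addition by the parallelogram bound
`(x + y)⋆(x + y) ≤ 2 (x⋆x + y⋆y)`. Now split `F (G d) - F' (G' d) = (F - F') (G d) + F' h` with
`h = G d - G' d`. The first summand lies in `N_ω` by assumption. For the second,
`ω ((F' h)⋆(F' h)) ≤ ω (F' (h⋆h)) = ω (F (h⋆h)) - ω ((F - F') (h⋆h)) = ξ (h⋆h) - 0 = 0`.
-/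

section Monotone

variable {A E 𝓕 : Type*} [NonUnitalSemiring A] [StarRing A] [PartialOrder A] [StarOrderedRing A]
  [AddCommMonoid E] [PartialOrder E] [IsOrderedAddMonoid E]
  [FunLike 𝓕 A E] [AddMonoidHomClass 𝓕 A E]

theorem monotone_of_map_star_mul_self_nonneg {f : 𝓕} (hf : ∀ a, 0 ≤ f (star a * a)) :
    Monotone f := by
  intro x y hxy
  obtain ⟨p, hp, rfl⟩ := (StarOrderedRing.le_iff x y).mp hxy
  rw [map_add]
  refine le_add_of_nonneg_right ?_
  clear hxy
  induction hp using AddSubmonoid.closure_induction with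
  | mem _ h => obtain ⟨a, rfl⟩ := h; exact hf a
  | zero => exact (map_zero f).ge
  | add _ _ _ _ hp hq => rw [map_add]; exact add_nonneg hp hq

end Monotone

theorem star_add_mul_add_le {A : Type*} [NonUnitalRing A] [StarRing A] [PartialOrder A]
    [StarOrderedRing A] (x y : A) :
    star (x + y) * (x + y) ≤ 2 • (star x * x + star y * y) :=
  calc star (x + y) * (x + y)
      ≤ star (x + y) * (x + y) + star (x - y) * (x - y) :=
        le_add_of_nonneg_right (star_mul_self_nonneg _)
    _ = 2 • (star x * x + star y * y) := by
        simp only [star_add, star_sub, add_mul, mul_add, sub_mul, mul_sub, two_nsmul]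
        abel

section Schwarz

variable {A E 𝓕 : Type*} [NonUnitalRing A] [StarRing A] [NonUnitalNormedRing E] [StarRing E]
  [FunLike 𝓕 A E]

def nullSpace (ω : 𝓕) : Set A :=
  {a | ω (star a * a) = 0}

variable [PartialOrder E]

def IsSchwarzMap (ω : 𝓕) : Prop :=
  ∀ a, star (ω a) * ω a ≤ ω (star a * a)

variable [StarOrderedRing E] {ω : 𝓕}

theorem IsSchwarzMap.map_star_mul_self_nonneg (hω : IsSchwarzMap ω) (a : A) :
    0 ≤ ω (star a * a) :=
  (star_mul_self_nonneg _).trans (hω a)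

theorem IsSchwarzMap.mem_nullSpace_of_map_nonpos (hω : IsSchwarzMap ω) {n : A}
    (hn : ω (star n * n) ≤ 0) : n ∈ nullSpace ω :=
  le_antisymm hn (hω.map_star_mul_self_nonneg n)

theorem IsSchwarzMap.map_eq_zero_of_mem_nullSpace [CStarRing E] (hω : IsSchwarzMap ω) {n : A}
    (hn : n ∈ nullSpace ω) : ω n = 0 := by
  have h : star (ω n) * ω n = 0 :=
    le_antisymm ((hω n).trans_eq hn) (star_mul_self_nonneg _)
  exact CStarRing.star_mul_self_eq_zero_iff _ |>.mp h

variable [PartialOrder A] [StarOrderedRing A] [AddMonoidHomClass 𝓕 A E]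

theorem IsSchwarzMap.monotone (hω : IsSchwarzMap ω) : Monotone ω :=
  monotone_of_map_star_mul_self_nonneg hω.map_star_mul_self_nonneg

theorem IsSchwarzMap.add_mem_nullSpace (hω : IsSchwarzMap ω) {x y : A}
    (hx : x ∈ nullSpace ω) (hy : y ∈ nullSpace ω) : x + y ∈ nullSpace ω := by
  refine hω.mem_nullSpace_of_map_nonpos ?_
  calc ω (star (x + y) * (x + y)) ≤ ω (2 • (star x * x + star y * y)) :=
        hω.monotone (star_add_mul_add_le x y)
    _ = 0 := by rw [map_nsmul, map_add, hx, hy, add_zero, nsmul_zero]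

end Schwarz

theorem spu_ae_classes_compose_general
    {A B D E : Type*}
    [CStarAlgebra A] [PartialOrder A] [StarOrderedRing A]
    [CStarAlgebra B]
    [CStarAlgebra D]
    [CStarAlgebra E] [PartialOrder E] [StarOrderedRing E]
    (ω : A →ₗ[ℂ] E)
    (hωKS : ∀ a : A, star (ω a) * ω a ≤ ω (star a * a))
    (F : B →ₗ[ℂ] A)
    (F' : B →ₗ[ℂ] A)
    (hF'KS : ∀ b : B, star (F' b) * F' b ≤ F' (star b * b))
    (hFF' : ∀ b : B, ω (star (F b - F' b) * (F b - F' b)) = 0)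
    (ξ : B →ₗ[ℂ] E) (hξ : ∀ b : B, ξ b = ω (F b))
    (G : D →ₗ[ℂ] B)
    (G' : D →ₗ[ℂ] B)
    (hGG' : ∀ d : D, ξ (star (G d - G' d) * (G d - G' d)) = 0) :
    ∀ d : D, ω (star (F (G d) - F' (G' d)) * (F (G d) - F' (G' d))) = 0 := by
  have hω : IsSchwarzMap ω := hωKS
  intro d
  set h := G d - G' d
  have hF'h : ω (F' (star h * h)) = 0 := by
    have hFh : ω (F (star h * h)) = 0 := (hξ _).symm.trans (hGG' d)
    have hdiff := hω.map_eq_zero_of_mem_nullSpace (hFF' (star h * h))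
    rwa [map_sub, hFh, zero_sub, neg_eq_zero] at hdiff
  have hF'null : F' h ∈ nullSpace ω :=
    hω.mem_nullSpace_of_map_nonpos ((hω.monotone (hF'KS h)).trans_eq hF'h)
  have hsplit : F (G d) - F' (G' d) = (F (G d) - F' (G d)) + F' h := by
    rw [map_sub]; abel
  rw [hsplit]
  exact hω.add_mem_nullSpace (hFF' (G d)) hF'null

/-- **A.e. equivalence classes of SPU maps compose.** Let `ω : A → E` be an SPU map between
unital C*-algebras over `ℂ`, let `F, F' : B → A` be SPU maps with `F b - F' b ∈ N_ω` for all
`b`, set `ξ := ω ∘ F`, and let `G, G' : D → B` be SPU maps with `G d - G' d ∈ N_ξ` for all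
`d`. Then `F (G d) - F' (G' d) ∈ N_ω` for all `d`. -/
theorem spu_ae_classes_compose
    {A B D E : Type*}
    [CStarAlgebra A] [PartialOrder A] [StarOrderedRing A]
    [CStarAlgebra B] [PartialOrder B] [StarOrderedRing B]
    [CStarAlgebra D]
    [CStarAlgebra E] [PartialOrder E] [StarOrderedRing E]
    (ω : A →ₗ[ℂ] E) (hω1 : ω 1 = 1)
    (hωKS : ∀ a : A, star (ω a) * ω a ≤ ω (star a * a))
    (F : B →ₗ[ℂ] A) (hF1 : F 1 = 1)
    (hFKS : ∀ b : B, star (F b) * F b ≤ F (star b * b))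
    (F' : B →ₗ[ℂ] A) (hF'1 : F' 1 = 1)
    (hF'KS : ∀ b : B, star (F' b) * F' b ≤ F' (star b * b))
    (hFF' : ∀ b : B, ω (star (F b - F' b) * (F b - F' b)) = 0)
    (ξ : B →ₗ[ℂ] E) (hξ : ∀ b : B, ξ b = ω (F b))
    (G : D →ₗ[ℂ] B) (hG1 : G 1 = 1)
    (hGKS : ∀ d : D, star (G d) * G d ≤ G (star d * d))
    (G' : D →ₗ[ℂ] B) (hG'1 : G' 1 = 1)
    (hG'KS : ∀ d : D, star (G' d) * G' d ≤ G' (star d * d))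
    (hGG' : ∀ d : D, ξ (star (G d - G' d) * (G d - G' d)) = 0) :
    ∀ d : D, ω (star (F (G d) - F' (G' d)) * (F (G d) - F' (G' d))) = 0 :=
  spu_ae_classes_compose_general ω hωKS F F' hF'KS hFF' ξ hξ G G' hGG'
end
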